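/- Let (X,d) be a complete extended metric space in which every closed ball of finite radius is compact. Then (X,d) is strictly intrinsic relative to d_ℓ: for any x,x' ∈ X with r := d_ℓ(x,x') < ∞ there exists a 1-Lipschitz map φ : [0,r] → (X,d) with φ(0) = x and φ(r) = x'. -/

import Mathlib

open ENNReal NNReal

/-- The intrinsic (length) extended distance associated to an extended metric:
the infimum of lengths `ℓ` of `1`-Lipschitz curves `[0, ℓ] → X` joining the two points. -/
noncomputable def intrinsicEDist {X : Type*} [EMetricSpace X] (x x' : X) : ℝ≥0∞ :=
  sInf {L : ℝ≥0∞ | ∃ ℓ : ℝ≥0, L = (ℓ : ℝ≥0∞) ∧ ∃ φ : ℝ → X,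
    LipschitzOnWith 1 φ (Set.Icc 0 (ℓ : ℝ)) ∧ φ 0 = x ∧ φ (ℓ : ℝ) = x'}

/-!
Take curves from `x` to `x'` of lengths `ℓₙ ↓ r` and restrict them to `[0, r]`: they are
`1`-Lipschitz, start at `x`, and their endpoints `φₙ r` lie within `ℓₙ - r` of `x'`. All their
values lie in the compact ball of radius `r` about `x`, so along an ultrafilter finer than `atTop`
they converge pointwise; the limit is again `1`-Lipschitz and joins `x` to `x'`.
-/

open Filter Topology Set

lemma LipschitzOnWith.of_tendsto {ι α β : Type*} [PseudoEMetricSpace α] [PseudoEMetricSpace β]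
    {l : Filter ι} [l.NeBot] {K : ℝ≥0} {s : Set α} {F : ι → α → β} {g : α → β}
    (hF : ∀ᶠ i in l, LipschitzOnWith K (F i) s)
    (hg : ∀ a ∈ s, Tendsto (F · a) l (𝓝 (g a))) :
    LipschitzOnWith K g s := fun _ ha _ hb =>
  le_of_tendsto ((hg _ ha).edist (hg _ hb)) (hF.mono fun _ hi => hi ha hb)

lemma LipschitzOnWith.mapsTo_closedEBall {α β : Type*} [PseudoEMetricSpace α]
    [PseudoEMetricSpace β] {K : ℝ≥0} {s : Set α} {f : α → β} (hf : LipschitzOnWith K f s)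
    {a : α} (ha : a ∈ s) : MapsTo f s (Metric.closedEBall (f a) (K * Metric.ediam s)) :=
  fun _ hb => hf.edist_le_mul_of_le hb ha (Metric.edist_le_ediam_of_mem hb ha)

lemma exists_tendsto_ultrafilter_of_mapsTo_isCompact {ι α X : Type*} [TopologicalSpace X]
    (U : Ultrafilter ι) {s : Set α} {K : Set X} (hK : IsCompact K) {F : ι → α → X}
    (hF : ∀ i, MapsTo (F i) s K) :
    ∃ g : α → X, ∀ a ∈ s, Tendsto (F · a) U (𝓝 (g a)) := by
  have (a : α) : ∃ y, a ∈ s → Tendsto (F · a) U (𝓝 y) := by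
    by_cases ha : a ∈ s
    · obtain ⟨y, -, hy⟩ := hK.ultrafilter_le_nhds' (U.map (F · a))
        (Ultrafilter.mem_map.2 (univ_mem' fun i => hF i ha))
      exact ⟨y, fun _ => hy⟩
    · obtain ⟨i, -⟩ := (U : Filter ι).nonempty_of_mem univ_mem
      exact ⟨F i a, fun h => absurd h ha⟩
  choose g hg using this
  exact ⟨g, hg⟩

lemma exists_seq_curves_of_intrinsicEDist_eq {X : Type*} [EMetricSpace X] {x x' : X} {r : ℝ≥0}
    (hr : intrinsicEDist x x' = r) :
    ∃ (ℓ : ℕ → ℝ≥0) (φ : ℕ → ℝ → X), (∀ n, r ≤ ℓ n) ∧ Tendsto ℓ atTop (𝓝 r) ∧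
      ∀ n, LipschitzOnWith 1 (φ n) (Icc 0 (ℓ n : ℝ)) ∧ φ n 0 = x ∧ φ n (ℓ n) = x' := by
  unfold intrinsicEDist at hr
  set S : Set ℝ≥0∞ := {L | ∃ ℓ : ℝ≥0, L = (ℓ : ℝ≥0∞) ∧ ∃ φ : ℝ → X,
    LipschitzOnWith 1 φ (Icc 0 (ℓ : ℝ)) ∧ φ 0 = x ∧ φ (ℓ : ℝ) = x'}
  have hS : S.Nonempty := nonempty_iff_ne_empty.2 fun h => by simp [h] at hr
  obtain ⟨u, -, hu, huS⟩ := exists_seq_tendsto_sInf hS (OrderBot.bddBelow S)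
  have hrle (n : ℕ) : (r : ℝ≥0∞) ≤ u n := hr ▸ sInf_le (huS n)
  choose ℓ hℓ φ hφ using huS
  refine ⟨ℓ, φ, fun n => ?_, ?_, hφ⟩
  · simpa [hℓ] using hrle n
  · rw [← ENNReal.tendsto_coe, ← hr]
    simpa only [← hℓ] using hu

lemma exists_seq_lipschitzOnWith_tendsto_of_intrinsicEDist_eq {X : Type*} [EMetricSpace X]
    {x x' : X} {r : ℝ≥0} (hr : intrinsicEDist x x' = r) :
    ∃ φ : ℕ → ℝ → X, (∀ n, LipschitzOnWith 1 (φ n) (Icc 0 (r : ℝ)) ∧ φ n 0 = x) ∧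
      Tendsto (fun n => φ n r) atTop (𝓝 x') := by
  obtain ⟨ℓ, φ, hrℓ, hℓ, hφ⟩ := exists_seq_curves_of_intrinsicEDist_eq hr
  have hsub (n : ℕ) : Icc 0 (r : ℝ) ⊆ Icc 0 (ℓ n : ℝ) :=
    Icc_subset_Icc_right (by exact_mod_cast hrℓ n)
  have hr_mem (n : ℕ) : (r : ℝ) ∈ Icc 0 (ℓ n : ℝ) := hsub n ⟨r.coe_nonneg, le_rfl⟩
  have hℓ_mem (n : ℕ) : (ℓ n : ℝ) ∈ Icc 0 (ℓ n : ℝ) := ⟨(ℓ n).coe_nonneg, le_rfl⟩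
  refine ⟨φ, fun n => ⟨(hφ n).1.mono (hsub n), (hφ n).2.1⟩, ?_⟩
  rw [tendsto_iff_edist_tendsto_0]
  have hgap : Tendsto (fun n => edist (r : ℝ) (ℓ n)) atTop (𝓝 0) := by
    simpa using
      (tendsto_const_nhds (x := (r : ℝ))).edist ((NNReal.continuous_coe.tendsto r).comp hℓ)
  refine tendsto_of_tendsto_of_tendsto_of_le_of_le tendsto_const_nhds hgap (fun _ => zero_le)
    fun n => ?_
  simpa [(hφ n).2.2] using (hφ n).1 (hr_mem n) (hℓ_mem n)

theorem strictly_intrinsic_of_compact_closedBalls {X : Type*} [EMetricSpace X]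
    (hX : ∀ (x : X) (r : ℝ≥0), IsCompact (EMetric.closedBall x (r : ℝ≥0∞))) :
    ∀ (x x' : X) (r : ℝ≥0), intrinsicEDist x x' = (r : ℝ≥0∞) →
      ∃ φ : ℝ → X, LipschitzOnWith 1 φ (Set.Icc 0 (r : ℝ)) ∧ φ 0 = x ∧ φ (r : ℝ) = x' := by
  intro x x' r hr
  obtain ⟨φ, hφ, hφr⟩ := exists_seq_lipschitzOnWith_tendsto_of_intrinsicEDist_eq hr
  have h0 : (0 : ℝ) ∈ Icc 0 (r : ℝ) := ⟨le_rfl, r.coe_nonneg⟩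
  have hrmem : (r : ℝ) ∈ Icc 0 (r : ℝ) := ⟨r.coe_nonneg, le_rfl⟩
  have hball (n : ℕ) : MapsTo (φ n) (Icc 0 (r : ℝ)) (Metric.closedEBall x r) := by
    simpa [(hφ n).2] using (hφ n).1.mapsTo_closedEBall h0
  let U : Ultrafilter ℕ := .of atTop
  obtain ⟨ψ, hψ⟩ := exists_tendsto_ultrafilter_of_mapsTo_isCompact U (hX x r) hball
  refine ⟨ψ, .of_tendsto (.of_forall fun n => (hφ n).1) hψ, ?_, ?_⟩
  · exact tendsto_nhds_unique (hψ 0 h0) (by simpa only [(hφ _).2] using tendsto_const_nhds)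
  · exact tendsto_nhds_unique (hψ r hrmem) (hφr.mono_left (Ultrafilter.of_le atTop))
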